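/- For p ∈ (0,1] and v > 0, define g_{v,p}(φ) := −√φ/p + (1/2)(1 − (1+vφ)^{−1/2})·√φ·(φ−1) + (√(1+vφ) − 1)·φ^{3/2} for φ ≥ 1, and suppose g_{v,p}(1) < 0. Then g_{v,p} has a unique zero φ₀(v,p) in (1,∞), and this zero is strictly decreasing in v and strictly decreasing in p: if v′ > v and g_{v′,p}(1) < 0 then φ₀(v′,p) < φ₀(v,p), and if p′ > p and g_{v,p′}(1) < 0 then φ₀(v,p′) < φ₀(v,p). Equivalently, the optimal interaction time increases with the behavioral-bias magnitude βσ₀ and decreases with the idiosyncratic-shock parameters p and σ_ε. -/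
import Mathlib

noncomputable def gOpt (v p φ : ℝ) : ℝ :=
  -Real.sqrt φ / p + (1/2) * (1 - 1/Real.sqrt (1 + v*φ)) * Real.sqrt φ * (φ - 1)
    + (Real.sqrt (1 + v*φ) - 1) * (φ * Real.sqrt φ)

noncomputable def hAux (v p φ : ℝ) : ℝ :=
  -1/p + (1/2) * (1 - 1/Real.sqrt (1 + v*φ)) * (φ - 1) + (Real.sqrt (1 + v*φ) - 1) * φ

lemma gOpt_eq (v p φ : ℝ) : gOpt v p φ = Real.sqrt φ * hAux v p φ := by
  unfold gOpt hAux; ring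

lemma sqrt_gt_one {v φ : ℝ} (hv : 0 < v) (hφ : 0 < φ) : 1 < Real.sqrt (1 + v*φ) := by
  have h : Real.sqrt 1 < Real.sqrt (1 + v*φ) := Real.sqrt_lt_sqrt (by norm_num) (by nlinarith)
  simpa using h

lemma hAux_strictMono (v p : ℝ) (hv : 0 < v) {x y : ℝ} (hx : 1 ≤ x) (hxy : x < y) :
    hAux v p x < hAux v p y := by
  have hx0 : (0:ℝ) < x := by linarith
  simp only [hAux]
  set s := Real.sqrt (1 + v*x) with hs
  set t := Real.sqrt (1 + v*y) with ht
  have hs1 : 1 < s := sqrt_gt_one hv hx0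
  have hst : s < t := Real.sqrt_lt_sqrt (by positivity) (by nlinarith)
  have hinv : 1/t < 1/s := one_div_lt_one_div_of_lt (by linarith) hst
  have hsinv : 1/s < 1 := by rw [div_lt_one (by linarith)]; exact hs1
  have hA : (1 - 1/s) * (x - 1) ≤ (1 - 1/t) * (y - 1) :=
    mul_le_mul (by linarith) (by linarith) (by linarith) (by linarith)
  have hB : (s - 1) * x < (t - 1) * y :=
    mul_lt_mul'' (by linarith) hxy (by linarith) (by linarith)
  linarith

lemma hAux_v_lt (p : ℝ) {v v' φ : ℝ} (hv : 0 < v) (hvv : v < v') (hφ : 1 < φ) :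
    hAux v p φ < hAux v' p φ := by
  have hφ0 : (0:ℝ) < φ := by linarith
  simp only [hAux]
  set s := Real.sqrt (1 + v*φ) with hs
  set t := Real.sqrt (1 + v'*φ) with ht
  have hs1 : 1 < s := sqrt_gt_one hv hφ0
  have hst : s < t := Real.sqrt_lt_sqrt (by positivity) (by nlinarith)
  have hinv : 1/t < 1/s := one_div_lt_one_div_of_lt (by linarith) hst
  have hA : (1 - 1/s) * (φ - 1) ≤ (1 - 1/t) * (φ - 1) :=
    mul_le_mul_of_nonneg_right (by linarith) (by linarith)
  have hB : (s - 1) * φ < (t - 1) * φ :=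
    mul_lt_mul_of_pos_right (by linarith) hφ0
  linarith

lemma hAux_p_lt (v : ℝ) {p p' φ : ℝ} (hp : 0 < p) (hpp : p < p') :
    hAux v p φ < hAux v p' φ := by
  have : 1/p' < 1/p := one_div_lt_one_div_of_lt hp hpp
  simp only [hAux, neg_div]
  linarith

lemma hAux_one (v p : ℝ) (h : gOpt v p 1 < 0) : hAux v p 1 < 0 := by
  have := gOpt_eq v p 1
  rw [Real.sqrt_one, one_mul] at this
  linarith

lemma hAux_zero_of_gOpt {v p φ : ℝ} (hφ : 0 < φ) (h : gOpt v p φ = 0) : hAux v p φ = 0 := by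
  rw [gOpt_eq] at h
  rcases mul_eq_zero.mp h with h' | h'
  · exact absurd h' (Real.sqrt_pos.mpr hφ).ne'
  · exact h'

lemma lt_of_sign {v p a b : ℝ} (hv : 0 < v) (ha : 1 ≤ a) (hb : 1 ≤ b)
    (hpos : 0 < hAux v p a) (hzero : hAux v p b = 0) : b < a := by
  by_contra h
  push_neg at h
  rcases eq_or_lt_of_le h with rfl | hlt
  · linarith
  · have := hAux_strictMono v p hv ha hlt; linarith

lemma exists_zero (v p : ℝ) (hv : 0 < v) (hp0 : 0 < p) (h1 : hAux v p 1 < 0) :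
    ∃ φ, 1 < φ ∧ hAux v p φ = 0 := by
  set c := Real.sqrt (1 + v) - 1 with hcdef
  have hc0 : 0 < c := by
    have : 1 < Real.sqrt (1 + v * 1) := sqrt_gt_one hv one_pos
    rw [mul_one] at this; simp only [hcdef]; linarith
  set M := max 2 (1/(p*c) + 1) with hM
  have hM2 : (2:ℝ) ≤ M := le_max_left _ _
  have hM1 : (1:ℝ) < M := by linarith
  have hMc : 1/(p*c) + 1 ≤ M := le_max_right _ _
  -- hAux v p M > 0
  have hMpos : 0 < hAux v p M := by
    set t := Real.sqrt (1 + v*M) with htdef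
    have ht1 : 1 < t := sqrt_gt_one hv (by linarith)
    have htc : Real.sqrt (1 + v) ≤ t := Real.sqrt_le_sqrt (by nlinarith)
    have hmid : 0 ≤ (1 - 1/t) * (M - 1) := by
      have : 1/t < 1 := by rw [div_lt_one (by linarith)]; exact ht1
      nlinarith
    have hcM : 1/p < c * M := by
      have h1' : c * (1/(p*c) + 1) ≤ c * M := mul_le_mul_of_nonneg_left hMc hc0.le
      have h2' : c * (1/(p*c) + 1) = 1/p + c := by
        field_simp
      linarith
    have htM : c * M ≤ (t - 1) * M := by
      apply mul_le_mul_of_nonneg_right (by linarith) (by linarith)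
    have h3 : 1/p < (t - 1) * M := lt_of_lt_of_le hcM htM
    simp only [hAux, neg_div]
    rw [← htdef]
    nlinarith [hmid, h3]
  have hsq : Continuous (fun φ : ℝ => Real.sqrt (1 + v*φ)) :=
    Real.continuous_sqrt.comp (by continuity)
  have hinv : ContinuousOn (fun φ : ℝ => 1 / Real.sqrt (1 + v*φ)) (Set.Icc 1 M) := by
    apply ContinuousOn.div continuousOn_const hsq.continuousOn
    intro x hx
    have hx1 : (1:ℝ) ≤ x := hx.1
    have : (0:ℝ) < 1 + v*x := by nlinarith
    exact (Real.sqrt_pos.mpr this).ne'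
  have hc : ContinuousOn (fun φ => hAux v p φ) (Set.Icc 1 M) := by
    simp only [hAux]
    apply ContinuousOn.add
    apply ContinuousOn.add continuousOn_const
    · exact (continuousOn_const.mul (continuousOn_const.sub hinv)).mul
        (continuousOn_id.sub continuousOn_const)
    · exact (hsq.continuousOn.sub continuousOn_const).mul continuousOn_id
  have hsub := intermediate_value_Ioo (le_of_lt hM1) hc
  have h0mem : (0:ℝ) ∈ Set.Ioo (hAux v p 1) (hAux v p M) := ⟨h1, hMpos⟩
  obtain ⟨φ, hφmem, hφeq⟩ := hsub h0mem
  exact ⟨φ, hφmem.1, hφeq⟩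

/-- If g_{v,p}(1) < 0 then g_{v,p} has a unique zero φ₀(v,p) in (1,∞), and
this zero is strictly decreasing in v and strictly decreasing in p. -/
theorem optimal_interaction_time_monotonicity
    (v p : ℝ) (hv : 0 < v) (hp : p ∈ Set.Ioc (0:ℝ) 1)
    (h1 : gOpt v p 1 < 0) :
    (∃! φ, φ ∈ Set.Ioi (1:ℝ) ∧ gOpt v p φ = 0) ∧
    (∀ v', v < v' → gOpt v' p 1 < 0 →
      ∀ φ₀ φ₀', φ₀ ∈ Set.Ioi (1:ℝ) → gOpt v p φ₀ = 0 →
        φ₀' ∈ Set.Ioi (1:ℝ) → gOpt v' p φ₀' = 0 → φ₀' < φ₀) ∧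
    (∀ p', p < p' → p' ≤ 1 → gOpt v p' 1 < 0 →
      ∀ φ₀ φ₀', φ₀ ∈ Set.Ioi (1:ℝ) → gOpt v p φ₀ = 0 →
        φ₀' ∈ Set.Ioi (1:ℝ) → gOpt v p' φ₀' = 0 → φ₀' < φ₀) := by
  obtain ⟨hp0, hp1⟩ := hp
  have h1' : hAux v p 1 < 0 := hAux_one v p h1
  refine ⟨?_, ?_, ?_⟩
  · obtain ⟨φ, hφ1, hφ0⟩ := exists_zero v p hv hp0 h1'
    refine ⟨φ, ⟨hφ1, by rw [gOpt_eq, hφ0, mul_zero]⟩, ?_⟩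
    rintro y ⟨hy1, hy0⟩
    have hy0' : hAux v p y = 0 := hAux_zero_of_gOpt (by linarith [Set.mem_Ioi.mp hy1]) hy0
    rcases lt_trichotomy y φ with h | h | h
    · have := hAux_strictMono v p hv (le_of_lt (Set.mem_Ioi.mp hy1)) h; linarith
    · exact h
    · have := hAux_strictMono v p hv hφ1.le h; linarith
  · intro v' hvv' _ φ₀ φ₀' hφ₀ hg₀ hφ₀' hg₀'
    have hφ₀1 : 1 < φ₀ := hφ₀
    have hφ₀'1 : 1 < φ₀' := hφ₀'
    have hz : hAux v p φ₀ = 0 := hAux_zero_of_gOpt (by linarith) hg₀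
    have hz' : hAux v' p φ₀' = 0 := hAux_zero_of_gOpt (by linarith) hg₀'
    have hpos : 0 < hAux v' p φ₀ := by
      have := hAux_v_lt p hv hvv' hφ₀1; linarith
    exact lt_of_sign (by linarith) hφ₀1.le hφ₀'1.le hpos hz'
  · intro p' hpp' _ _ φ₀ φ₀' hφ₀ hg₀ hφ₀' hg₀'
    have hφ₀1 : 1 < φ₀ := hφ₀
    have hφ₀'1 : 1 < φ₀' := hφ₀'
    have hz : hAux v p φ₀ = 0 := hAux_zero_of_gOpt (by linarith) hg₀
    have hz' : hAux v p' φ₀' = 0 := hAux_zero_of_gOpt (by linarith) hg₀'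
    have hpos : 0 < hAux v p' φ₀ := by
      have := hAux_p_lt v hp0 hpp' (φ := φ₀); linarith
    exact lt_of_sign hv hφ₀1.le hφ₀'1.le hpos hz'
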